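/- (Lemma 2: Concavity of the canonical dual function) For every μ > 0, the function (ς,σ) ↦ P^d_μ(ς,σ) is concave on the convex set S_μ⁺. -/

import Mathlib

/-!
`P^d_μ(ς,σ)` is the minimum over `x` of the total complementary function `Ξ_μ(x,ς,σ)`, attained
at `x = G_μ(ς,σ)⁻¹(c − σb)` by completing the square. For fixed `x`, `Ξ_μ(x,·,·)` is affine
apart from the concave term `−(μ/2)ς²`, and a pointwise minimum of concave functions is concave.
The domain `S_μ⁺` is convex because `G_μ` is affine in `(ς,σ)` and the positive definite matrices
form a convex set.
-/

open Matrix Set Filter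

noncomputable section

/-- `q(x) = ½ xᵀQx − cᵀx`. -/
def qfun {n : ℕ} (Q : Matrix (Fin n) (Fin n) ℝ) (c : Fin n → ℝ) (x : Fin n → ℝ) : ℝ :=
  (1/2) * (x ⬝ᵥ (Q *ᵥ x)) - c ⬝ᵥ x

/-- `g(x) = ½ (½|Bx|² − λ)²`. -/
def gfun {n m : ℕ} (B : Matrix (Fin m) (Fin n) ℝ) (lam : ℝ) (x : Fin n → ℝ) : ℝ :=
  (1/2) * ((1/2) * ((B *ᵥ x) ⬝ᵥ (B *ᵥ x)) - lam)^2

/-- `h(x) = ½ xᵀHx − bᵀx`. -/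
def hfun {n : ℕ} (H : Matrix (Fin n) (Fin n) ℝ) (b : Fin n → ℝ) (x : Fin n → ℝ) : ℝ :=
  (1/2) * (x ⬝ᵥ (H *ᵥ x)) - b ⬝ᵥ x

/-- `G_μ(ς,σ) = Q + μς BᵀB − σH`. -/
def Gmu {n m : ℕ} (Q : Matrix (Fin n) (Fin n) ℝ) (B : Matrix (Fin m) (Fin n) ℝ)
    (H : Matrix (Fin n) (Fin n) ℝ) (μ ς σ : ℝ) : Matrix (Fin n) (Fin n) ℝ :=
  Q + (μ * ς) • (Bᵀ * B) - σ • H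

/-- The dual feasible set `S_μ⁺`. -/
def Smu {n m : ℕ} (Q : Matrix (Fin n) (Fin n) ℝ) (B : Matrix (Fin m) (Fin n) ℝ)
    (H : Matrix (Fin n) (Fin n) ℝ) (lam μ : ℝ) : Set (ℝ × ℝ) :=
  {p : ℝ × ℝ | -lam ≤ p.1 ∧ 0 ≤ p.2 ∧ (Gmu Q B H μ p.1 p.2).PosDef}

/-- The canonical dual function `P^d_μ(ς,σ)`. -/
def Pd {n m : ℕ} (Q : Matrix (Fin n) (Fin n) ℝ) (B : Matrix (Fin m) (Fin n) ℝ)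
    (H : Matrix (Fin n) (Fin n) ℝ) (lam : ℝ) (c b : Fin n → ℝ) (μ ς σ : ℝ) : ℝ :=
  -(1/2) * ((c - σ • b) ⬝ᵥ ((Gmu Q B H μ ς σ)⁻¹ *ᵥ (c - σ • b)))
    - μ * lam * ς - (μ/2) * ς^2 + σ/μ

/-- The total complementary function `Ξ_μ(x,ς,σ)`. -/
def Xi {n m : ℕ} (Q : Matrix (Fin n) (Fin n) ℝ) (B : Matrix (Fin m) (Fin n) ℝ)
    (H : Matrix (Fin n) (Fin n) ℝ) (lam : ℝ) (c b : Fin n → ℝ)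
    (μ : ℝ) (x : Fin n → ℝ) (ς σ : ℝ) : ℝ :=
  (1/2) * (x ⬝ᵥ (Gmu Q B H μ ς σ *ᵥ x)) - (c - σ • b) ⬝ᵥ x
    - μ * lam * ς - (μ/2) * ς^2 + σ/μ

theorem concaveOn_of_le_of_exists_eq {𝕜 E β ι : Type*} [Semiring 𝕜] [PartialOrder 𝕜]
    [AddCommMonoid E] [AddCommMonoid β] [PartialOrder β] [IsOrderedAddMonoid β]
    [SMul 𝕜 E] [Module 𝕜 β] [PosSMulMono 𝕜 β] {s : Set E} {f : E → β} {g : ι → E → β}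
    (hs : Convex 𝕜 s) (hg : ∀ i, ConcaveOn 𝕜 s (g i)) (hle : ∀ i, ∀ x ∈ s, f x ≤ g i x)
    (heq : ∀ x ∈ s, ∃ i, g i x = f x) : ConcaveOn 𝕜 s f := by
  refine ⟨hs, fun x hx y hy a b ha hb hab => ?_⟩
  obtain ⟨i, hi⟩ := heq _ (hs hx hy ha hb hab)
  calc a • f x + b • f y ≤ a • g i x + b • g i y := by gcongr <;> exact hle i _ ‹_›
    _ ≤ g i (a • x + b • y) := (hg i).2 hx hy ha hb hab
    _ = f (a • x + b • y) := hi

theorem Matrix.convex_setOf_posDef {ι : Type*} [Fintype ι] :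
    Convex ℝ {A : Matrix ι ι ℝ | A.PosDef} := by
  intro A hA C hC a b ha hb hab
  rcases ha.eq_or_lt with rfl | ha
  · simpa [show b = 1 by linarith] using hC
  · exact (PosDef.smul hA ha).add_posSemidef (PosSemidef.smul hC.posSemidef hb)

theorem Matrix.IsSymm.dotProduct_mulVec_comm {ι R : Type*} [Fintype ι] [CommSemiring R]
    {G : Matrix ι ι R} (hG : G.IsSymm) (u v : ι → R) :
    u ⬝ᵥ (G *ᵥ v) = v ⬝ᵥ (G *ᵥ u) := by
  rw [dotProduct_mulVec, ← mulVec_transpose, hG.eq, dotProduct_comm]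

namespace Matrix.PosDef

variable {ι : Type*} [Fintype ι] [DecidableEq ι] {G : Matrix ι ι ℝ}

theorem mulVec_inv_mulVec (hG : G.PosDef) (d : ι → ℝ) : G *ᵥ (G⁻¹ *ᵥ d) = d := by
  rw [mulVec_mulVec, mul_nonsing_inv _ (isUnit_iff_isUnit_det G |>.mp hG.isUnit), one_mulVec]

/-- Completing the square: `½ xᵀGx − dᵀx = ½ (x − G⁻¹d)ᵀG(x − G⁻¹d) − ½ dᵀG⁻¹d`. -/
theorem neg_half_dotProduct_inv_mulVec_le (hG : G.PosDef) (d x : ι → ℝ) :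
    -(1/2) * (d ⬝ᵥ (G⁻¹ *ᵥ d)) ≤ (1/2) * (x ⬝ᵥ (G *ᵥ x)) - d ⬝ᵥ x := by
  have hGs : G.IsSymm := by simpa [IsSymm] using hG.isHermitian.eq
  set y := G⁻¹ *ᵥ d
  have hsq : (x - y) ⬝ᵥ (G *ᵥ (x - y)) = x ⬝ᵥ (G *ᵥ x) - 2 * (d ⬝ᵥ x) + d ⬝ᵥ y := by
    have hxy : x ⬝ᵥ (G *ᵥ y) = d ⬝ᵥ x := by rw [hG.mulVec_inv_mulVec, dotProduct_comm]
    have hyx : y ⬝ᵥ (G *ᵥ x) = d ⬝ᵥ x := by rw [hGs.dotProduct_mulVec_comm, hxy]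
    have hyy : y ⬝ᵥ (G *ᵥ y) = d ⬝ᵥ y := by rw [hG.mulVec_inv_mulVec, dotProduct_comm]
    simp only [mulVec_sub, sub_dotProduct, dotProduct_sub, hxy, hyx, hyy]
    ring
  have := hG.posSemidef.dotProduct_mulVec_nonneg (x - y)
  simp only [star_trivial] at this
  linarith

theorem neg_half_dotProduct_inv_mulVec_eq (hG : G.PosDef) (d : ι → ℝ) :
    -(1/2) * (d ⬝ᵥ (G⁻¹ *ᵥ d)) =
      (1/2) * ((G⁻¹ *ᵥ d) ⬝ᵥ (G *ᵥ (G⁻¹ *ᵥ d))) - d ⬝ᵥ (G⁻¹ *ᵥ d) := by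
  rw [hG.mulVec_inv_mulVec, dotProduct_comm]
  ring

end Matrix.PosDef

theorem concaveOn_univ_add_mul_fst_sub_mul_snd_sub_sq (α β γ : ℝ) {κ : ℝ} (hκ : 0 ≤ κ) :
    ConcaveOn ℝ univ (fun p : ℝ × ℝ => α + β * p.1 - γ * p.2 - κ * p.1 ^ 2) := by
  refine ⟨convex_univ, fun p _ q _ a b ha hb hab => ?_⟩
  obtain rfl : b = 1 - a := by linarith
  simp only [Prod.fst_add, Prod.snd_add, Prod.smul_fst, Prod.smul_snd, smul_eq_mul]
  nlinarith [mul_nonneg (mul_nonneg hκ (mul_nonneg ha hb)) (sq_nonneg (p.1 - q.1))]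

section CanonicalDual

variable {n m : ℕ} (Q : Matrix (Fin n) (Fin n) ℝ) (B : Matrix (Fin m) (Fin n) ℝ)
  (H : Matrix (Fin n) (Fin n) ℝ) (lam : ℝ) (c b : Fin n → ℝ) (μ : ℝ)

theorem Gmu_add_smul {a b : ℝ} (hab : a + b = 1) (ς₁ σ₁ ς₂ σ₂ : ℝ) :
    Gmu Q B H μ (a * ς₁ + b * ς₂) (a * σ₁ + b * σ₂) =
      a • Gmu Q B H μ ς₁ σ₁ + b • Gmu Q B H μ ς₂ σ₂ := by
  obtain rfl : b = 1 - a := by linarith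
  ext i j
  simp only [Gmu, Matrix.add_apply, Matrix.sub_apply, Matrix.smul_apply, smul_eq_mul]
  ring

theorem convex_Smu : Convex ℝ (Smu Q B H lam μ) := by
  rintro p ⟨hp₁, hp₂, hGp⟩ q ⟨hq₁, hq₂, hGq⟩ a b ha hb hab
  refine ⟨?_, ?_, ?_⟩
  · simp only [Prod.fst_add, Prod.smul_fst, smul_eq_mul]
    linear_combination mul_le_mul_of_nonneg_left hp₁ ha + mul_le_mul_of_nonneg_left hq₁ hb
      + lam * hab
  · simp only [Prod.snd_add, Prod.smul_snd, smul_eq_mul]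
    positivity
  · simp only [Prod.fst_add, Prod.snd_add, Prod.smul_fst, Prod.smul_snd, smul_eq_mul,
      Gmu_add_smul Q B H μ hab]
    exact convex_setOf_posDef hGp hGq ha hb hab

theorem Xi_eq (x : Fin n → ℝ) (ς σ : ℝ) :
    Xi Q B H lam c b μ x ς σ = qfun Q c x + μ * ς * ((1/2) * ((B *ᵥ x) ⬝ᵥ (B *ᵥ x)) - lam)
      - σ * (hfun H b x - 1/μ) - (μ/2) * ς ^ 2 := by
  have hBB : x ⬝ᵥ ((Bᵀ * B) *ᵥ x) = (B *ᵥ x) ⬝ᵥ (B *ᵥ x) := by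
    rw [← mulVec_mulVec, dotProduct_mulVec, vecMul_transpose]
  simp only [Xi, qfun, hfun, Gmu, sub_mulVec, add_mulVec, smul_mulVec, dotProduct_sub,
    dotProduct_add, dotProduct_smul, sub_dotProduct, smul_dotProduct, smul_eq_mul, hBB]
  ring

theorem concaveOn_Xi (hμ : 0 ≤ μ) (x : Fin n → ℝ) :
    ConcaveOn ℝ univ (fun p : ℝ × ℝ => Xi Q B H lam c b μ x p.1 p.2) := by
  convert concaveOn_univ_add_mul_fst_sub_mul_snd_sub_sq (qfun Q c x)
    (μ * ((1/2) * ((B *ᵥ x) ⬝ᵥ (B *ᵥ x)) - lam)) (hfun H b x - 1/μ) (κ := μ/2) (by positivity)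
    using 2 with p
  rw [Xi_eq]
  ring

theorem Pd_le_Xi {ς σ : ℝ} (hG : (Gmu Q B H μ ς σ).PosDef) (x : Fin n → ℝ) :
    Pd Q B H lam c b μ ς σ ≤ Xi Q B H lam c b μ x ς σ := by
  have := hG.neg_half_dotProduct_inv_mulVec_le (c - σ • b) x
  simp only [Pd, Xi]
  linarith

theorem Xi_inv_mulVec_eq_Pd {ς σ : ℝ} (hG : (Gmu Q B H μ ς σ).PosDef) :
    Xi Q B H lam c b μ ((Gmu Q B H μ ς σ)⁻¹ *ᵥ (c - σ • b)) ς σ = Pd Q B H lam c b μ ς σ := by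
  have := hG.neg_half_dotProduct_inv_mulVec_eq (c - σ • b)
  simp only [Pd, Xi]
  linarith

end CanonicalDual

theorem stmt_17_general {n m : ℕ}
    (Q : Matrix (Fin n) (Fin n) ℝ)
    (B : Matrix (Fin m) (Fin n) ℝ)
    (H : Matrix (Fin n) (Fin n) ℝ)
    (lam : ℝ) (c b : Fin n → ℝ) :
    ∀ μ : ℝ, 0 < μ →
      ConcaveOn ℝ (Smu Q B H lam μ)
        (fun p : ℝ × ℝ => Pd Q B H lam c b μ p.1 p.2) := by
  intro μ hμ
  have hS := convex_Smu Q B H lam μ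
  refine concaveOn_of_le_of_exists_eq hS
    (fun x => (concaveOn_Xi Q B H lam c b μ hμ.le x).subset (subset_univ _) hS)
    (fun x p hp => Pd_le_Xi Q B H lam c b μ hp.2.2 x)
    (fun p hp => ⟨_, Xi_inv_mulVec_eq_Pd Q B H lam c b μ hp.2.2⟩)

/-- Lemma 2: for every `μ > 0`, the canonical dual function
`(ς,σ) ↦ P^d_μ(ς,σ)` is concave on the convex set `S_μ⁺`. -/
theorem stmt_17 {n m : ℕ} (hn : 0 < n) (hm : 0 < m)
    (Q : Matrix (Fin n) (Fin n) ℝ) (hQsymm : Q.IsSymm)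
    (B : Matrix (Fin m) (Fin n) ℝ)
    (H : Matrix (Fin n) (Fin n) ℝ) (hHsymm : H.IsSymm) (hHneg : (-H).PosDef)
    (lam : ℝ) (hlam : 0 ≤ lam) (c b : Fin n → ℝ) :
    ∀ μ : ℝ, 0 < μ →
      ConcaveOn ℝ (Smu Q B H lam μ)
        (fun p : ℝ × ℝ => Pd Q B H lam c b μ p.1 p.2) :=
  stmt_17_general Q B H lam c b
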